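/- arXiv:math/0411392 — 2 statements merged into one kernel-verified Lean document; each statement's English description precedes it below -/
import Mathlib

section
/- Suppose the Verblunsky coefficients satisfy |α_n| ≤ C q^n for all n ≥ 0, where C > 0 and q ∈ (0,1). Then for every q' ∈ (q,1) there is a constant C̃_{q'} > 0 such that for all n ≥ 0 and all z with |z| ≤ q', |Φ_n*(z) − S(z)| ≤ C̃_{q'} (q q')^n. -/
open Polynomial Filter Topology

/-- The monic orthogonal polynomials on the unit circle, defined by the Szegő
recursion `Φ₀ = 1`, `Φ_{n+1}(z) = z Φ_n(z) - conj(α_n) Φ_n^*(z)`, where the reversed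
polynomial is `P^*(z) = Σ_{j=0}^n conj(c_{n-j}) z^j`. -/
noncomputable def PhiP (α : ℕ → ℂ) : ℕ → Polynomial ℂ
  | 0 => 1
  | n + 1 => X * PhiP α n -
      Polynomial.C ((starRingEnd ℂ) (α n)) *
        Polynomial.reflect n (Polynomial.map (starRingEnd ℂ) (PhiP α n))

/-- The reversed polynomial `Φ_n^*(z) = z^n conj(Φ_n(1/conj z))`. -/
noncomputable def PhiStarP (α : ℕ → ℂ) (n : ℕ) : Polynomial ℂ :=
  Polynomial.reflect n (Polynomial.map (starRingEnd ℂ) (PhiP α n))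

/-!
Each step changes `Φₙ^*` by `αₙ z Φₙ(z)`. On the closed unit disk `max(|Φₙ|, |Φₙ^*|)` grows at
most by the factor `1 + |αₙ|`, so `Φₙ^*` stays bounded there because `Σ |αₙ| < ∞`. Feeding this
bound into `Φₙ₊₁ = z Φₙ - ᾱₙ Φₙ^*` gives `Φₙ(z) = O(q'ⁿ)` for `|z| ≤ q'`, so the increments of
`Φₙ^*(z)` are `O((q q')ⁿ)` and summing the geometric tail gives the rate.
-/

lemma Polynomial.reflect_succ_X_mul {R : Type*} [Semiring R] {p : R[X]} {n : ℕ}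
    (h : p.natDegree ≤ n) : reflect (n + 1) (X * p) = reflect n p := by
  rw [add_comm, reflect_mul X p natDegree_X_le h, reflect_one_X, one_mul]

lemma le_geometric_of_le_mul_add_geometric {x : ℕ → ℝ} {a b B : ℝ} (hb : 0 ≤ b) (hba : b < a)
    (hB : 0 ≤ B) (hx : ∀ n, x (n + 1) ≤ a * x n + B * b ^ n) (n : ℕ) :
    x n ≤ (x 0 + B / (a - b)) * a ^ n := by
  set D := B / (a - b)
  have hD : D * (a - b) = B := div_mul_cancel₀ B (sub_pos.mpr hba).ne'
  suffices h : ∀ n, x n ≤ (x 0 + D) * a ^ n - D * b ^ n by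
    have : 0 ≤ D * b ^ n := by positivity
    linarith [h n]
  intro n
  induction n with
  | zero => simp
  | succ n ih =>
    calc x (n + 1) ≤ a * ((x 0 + D) * a ^ n - D * b ^ n) + B * b ^ n :=
          (hx n).trans (by gcongr; linarith)
      _ = (x 0 + D) * a ^ (n + 1) - D * b ^ (n + 1) := by rw [← hD]; ring

section Szego

variable (α : ℕ → ℂ)

lemma natDegree_phiP_le (n : ℕ) : (PhiP α n).natDegree ≤ n := by
  induction n with
  | zero => simp [PhiP]
  | succ n ih =>
    rw [PhiP]
    refine (natDegree_sub_le _ _).trans (max_le ?_ ?_)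
    · exact natDegree_mul_le.trans (by simp; omega)
    · refine natDegree_mul_le.trans ?_
      simpa using (natDegree_reflect_le.trans (max_le le_rfl (by simpa using ih))).trans
        n.le_succ

lemma phiP_succ (n : ℕ) :
    PhiP α (n + 1) = X * PhiP α n - C ((starRingEnd ℂ) (α n)) * PhiStarP α n := by
  rw [PhiP, PhiStarP]

lemma phiStarP_succ (n : ℕ) :
    PhiStarP α (n + 1) = PhiStarP α n - C (α n) * (X * PhiP α n) := by
  have hdeg := natDegree_phiP_le α n
  have hconj : (starRingEnd ℂ).comp (starRingEnd ℂ) = RingHom.id ℂ := by ext; simp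
  rw [PhiStarP, phiP_succ, Polynomial.map_sub, Polynomial.map_mul, Polynomial.map_mul,
    Polynomial.map_X, map_C, reflect_sub, reflect_C_mul, reflect_succ_X_mul (by simpa),
    PhiStarP, ← reflect_map, Polynomial.map_map, hconj, Polynomial.map_id,
    ← reflect_succ_X_mul hdeg, reflect_reflect, Complex.conj_conj]

lemma eval_phiP_succ (n : ℕ) (z : ℂ) :
    (PhiP α (n + 1)).eval z =
      z * (PhiP α n).eval z - (starRingEnd ℂ) (α n) * (PhiStarP α n).eval z := by
  simp [phiP_succ]

lemma eval_phiStarP_succ (n : ℕ) (z : ℂ) :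
    (PhiStarP α (n + 1)).eval z = (PhiStarP α n).eval z - α n * (z * (PhiP α n).eval z) := by
  simp [phiStarP_succ]

lemma norm_eval_phiP_phiStarP_le_prod {z : ℂ} (hz : ‖z‖ ≤ 1) (n : ℕ) :
    ‖(PhiP α n).eval z‖ ≤ ∏ k ∈ Finset.range n, (1 + ‖α k‖) ∧
      ‖(PhiStarP α n).eval z‖ ≤ ∏ k ∈ Finset.range n, (1 + ‖α k‖) := by
  induction n with
  | zero => simp [PhiP, PhiStarP]
  | succ n ih =>
    obtain ⟨hΦ, hΦstar⟩ := ih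
    set P := ∏ k ∈ Finset.range n, (1 + ‖α k‖)
    have hzΦ : ‖z * (PhiP α n).eval z‖ ≤ P := by
      rw [norm_mul]; exact (mul_le_mul hz hΦ (norm_nonneg _) zero_le_one).trans_eq (one_mul P)
    rw [Finset.prod_range_succ, eval_phiP_succ, eval_phiStarP_succ]
    constructor
    · calc _ ≤ ‖z * (PhiP α n).eval z‖ + ‖α n‖ * ‖(PhiStarP α n).eval z‖ :=
            (norm_sub_le _ _).trans_eq (by simp only [norm_mul, Complex.norm_conj])
        _ ≤ P + ‖α n‖ * P := by gcongr
        _ = P * (1 + ‖α n‖) := by ring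
    · calc _ ≤ ‖(PhiStarP α n).eval z‖ + ‖α n‖ * ‖z * (PhiP α n).eval z‖ :=
            (norm_sub_le _ _).trans_eq (by rw [norm_mul])
        _ ≤ P + ‖α n‖ * P := by gcongr
        _ = P * (1 + ‖α n‖) := by ring

lemma norm_eval_phiStarP_le_exp_tsum (hα : Summable fun n => ‖α n‖) {z : ℂ} (hz : ‖z‖ ≤ 1)
    (n : ℕ) : ‖(PhiStarP α n).eval z‖ ≤ Real.exp (∑' k, ‖α k‖) :=
  calc _ ≤ ∏ k ∈ Finset.range n, (1 + ‖α k‖) := (norm_eval_phiP_phiStarP_le_prod α hz n).2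
    _ ≤ Real.exp (∑ k ∈ Finset.range n, ‖α k‖) :=
      Real.prod_one_add_le_exp_sum _ fun _ => norm_nonneg _
    _ ≤ Real.exp (∑' k, ‖α k‖) :=
      Real.exp_le_exp.mpr (hα.sum_le_tsum _ fun _ _ => norm_nonneg _)

variable {α} {C q r M : ℝ} {z : ℂ}

lemma norm_eval_phiP_le_geometric (hq : 0 ≤ q) (hqr : q < r) (hdecay : ∀ n, ‖α n‖ ≤ C * q ^ n)
    (hM : ∀ n, ‖(PhiStarP α n).eval z‖ ≤ M) (hz : ‖z‖ ≤ r) (n : ℕ) :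
    ‖(PhiP α n).eval z‖ ≤ (1 + C * M / (r - q)) * r ^ n := by
  have hC : 0 ≤ C := by simpa using (norm_nonneg (α 0)).trans (hdecay 0)
  have hM0 : 0 ≤ M := (norm_nonneg _).trans (hM 0)
  have hstep : ∀ n, ‖(PhiP α (n + 1)).eval z‖ ≤ r * ‖(PhiP α n).eval z‖ + C * M * q ^ n := by
    intro n
    calc _ ≤ ‖z‖ * ‖(PhiP α n).eval z‖ + ‖α n‖ * ‖(PhiStarP α n).eval z‖ := by
          rw [eval_phiP_succ]
          exact (norm_sub_le _ _).trans_eq (by rw [norm_mul, norm_mul, Complex.norm_conj])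
      _ ≤ r * ‖(PhiP α n).eval z‖ + C * q ^ n * M := by gcongr <;> simp only [hdecay, hM]
      _ = r * ‖(PhiP α n).eval z‖ + C * M * q ^ n := by ring
  simpa [PhiP] using le_geometric_of_le_mul_add_geometric
    (x := fun n => ‖(PhiP α n).eval z‖) hq hqr (mul_nonneg hC hM0) hstep n

lemma norm_eval_phiStarP_sub_le (hq : 0 ≤ q) (hqr : q < r) (hqr1 : q * r < 1)
    (hdecay : ∀ n, ‖α n‖ ≤ C * q ^ n) (hM : ∀ n, ‖(PhiStarP α n).eval z‖ ≤ M) (hz : ‖z‖ ≤ r)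
    {s : ℂ} (hs : Tendsto (fun n => (PhiStarP α n).eval z) atTop (𝓝 s)) (n : ℕ) :
    ‖(PhiStarP α n).eval z - s‖ ≤ C * (1 + C * M / (r - q)) * r / (1 - q * r) * (q * r) ^ n := by
  set K := 1 + C * M / (r - q)
  have hr : 0 ≤ r := hq.trans hqr.le
  have hstep : ∀ n, dist ((PhiStarP α n).eval z) ((PhiStarP α (n + 1)).eval z) ≤
      C * K * r * (q * r) ^ n := by
    intro n
    calc _ = ‖α n‖ * (‖z‖ * ‖(PhiP α n).eval z‖) := by
          simp [eval_phiStarP_succ]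
      _ ≤ C * q ^ n * (r * (K * r ^ n)) := by
          gcongr
          · exact (norm_nonneg _).trans (hdecay n)
          · exact hdecay n
          · exact norm_eval_phiP_le_geometric hq hqr hdecay hM hz n
      _ = C * K * r * (q * r) ^ n := by ring
  rw [← dist_eq_norm, div_mul_eq_mul_div]
  exact dist_le_of_le_geometric_of_tendsto _ _ hqr1 hstep hs n

end Szego

theorem stmt_4_general (α : ℕ → ℂ)
    (C q : ℝ) (hC : 0 < C) (hq0 : 0 < q) (hq1 : q < 1)
    (hdecay : ∀ n : ℕ, ‖α n‖ ≤ C * q ^ n)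
    (S : ℂ → ℂ)
    (hS : ∀ z : ℂ, ‖z‖ < 1 / q →
      Tendsto (fun n : ℕ => (PhiStarP α n).eval z) atTop (nhds (S z))) :
    ∀ q' : ℝ, q < q' → q' < 1 →
      ∃ Ct : ℝ, 0 < Ct ∧ ∀ n : ℕ, ∀ z : ℂ, ‖z‖ ≤ q' →
        ‖(PhiStarP α n).eval z - S z‖ ≤ Ct * (q * q') ^ n := by
  intro q' hqq' hq'1
  have hsummable : Summable fun n => ‖α n‖ :=
    .of_nonneg_of_le (fun _ => norm_nonneg _) hdecay
      ((summable_geometric_of_lt_one hq0.le hq1).mul_left C)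
  set M := Real.exp (∑' k, ‖α k‖)
  have hqq'1 : q * q' < 1 := by nlinarith
  have hK : 0 < 1 + C * M / (q' - q) :=
    add_pos_of_pos_of_nonneg one_pos (div_nonneg (by positivity) (sub_pos.mpr hqq').le)
  refine ⟨C * (1 + C * M / (q' - q)) * q' / (1 - q * q'),
    div_pos (mul_pos (mul_pos hC hK) (hq0.trans hqq')) (sub_pos.mpr hqq'1), fun n z hz => ?_⟩
  have hz1 : ‖z‖ ≤ 1 := hz.trans hq'1.le
  have hzq : ‖z‖ < 1 / q := hz1.trans_lt (one_lt_one_div hq0 hq1)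
  exact norm_eval_phiStarP_sub_le hq0.le hqq' hqq'1 hdecay
    (norm_eval_phiStarP_le_exp_tsum α hsummable hz1) hz (hS z hzq) n

theorem stmt_4 (α : ℕ → ℂ) (hα : ∀ n, ‖α n‖ < 1)
    (C q : ℝ) (hC : 0 < C) (hq0 : 0 < q) (hq1 : q < 1)
    (hdecay : ∀ n : ℕ, ‖α n‖ ≤ C * q ^ n)
    (S : ℂ → ℂ)
    (hS : ∀ z : ℂ, ‖z‖ < 1 / q →
      Tendsto (fun n : ℕ => (PhiStarP α n).eval z) atTop (nhds (S z))) :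
    ∀ q' : ℝ, q < q' → q' < 1 →
      ∃ Ct : ℝ, 0 < Ct ∧ ∀ n : ℕ, ∀ z : ℂ, ‖z‖ ≤ q' →
        ‖(PhiStarP α n).eval z - S z‖ ≤ Ct * (q * q') ^ n :=
  stmt_4_general α C q hC hq0 hq1 hdecay S hS
end

section
/- Suppose the Verblunsky coefficients satisfy |α_n| ≤ C q^n for all n ≥ 0, where C > 0 and q ∈ (0,1). Then for every z with |z| > q, lim_{n→∞} z^{-n} Φ_n(z) = conj(S(1/conj(z))); note that |1/conj(z)| < 1/q so the right-hand side is defined. -/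
open Polynomial Filter Topology

/-! Since `Φ_n` has degree at most `n`, reversing it gives `Φ_n(z) / zⁿ = conj (Φ_n^*(1 / conj z))`,
and `|1 / conj z| < 1 / q` puts `1 / conj z` in the region where `Φ_n^*` converges to `S`. -/

open ComplexConjugate

lemma natDegree_PhiP_le (α : ℕ → ℂ) (n : ℕ) : (PhiP α n).natDegree ≤ n := by
  induction n with
  | zero => simp [PhiP]
  | succ n ih =>
    rw [PhiP]
    refine (natDegree_sub_le _ _).trans (max_le ?_ ?_)
    · refine natDegree_mul_le.trans ?_
      rw [natDegree_X]
      omega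
    · refine natDegree_C_mul_le _ _ |>.trans <| natDegree_reflect_le.trans ?_
      exact max_le n.le_succ (natDegree_map_le.trans (ih.trans n.le_succ))

lemma eval_div_pow_eq_conj_eval_reflect_map_conj {K : Type*} [RCLike K] {P : K[X]} {n : ℕ}
    (hP : P.natDegree ≤ n) {z : K} (hz : z ≠ 0) :
    P.eval z / z ^ n = conj ((P.map (starRingEnd K)).reflect n |>.eval (conj z)⁻¹) := by
  have : Invertible (conj z) := invertibleOfNonzero (by simpa using hz)
  have h := eval₂_reflect_mul_pow (starRingEnd K) (conj z) n P hP
  rw [invOf_eq_inv, eval₂_at_apply] at h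
  rw [reflect_map, eval_map, div_eq_iff (pow_ne_zero n hz), ← RCLike.conj_conj (eval z P), ← h]
  simp

theorem stmt_5_general (α : ℕ → ℂ)
    (q : ℝ) (hq0 : 0 < q)
    (S : ℂ → ℂ)
    (hS : ∀ z : ℂ, ‖z‖ < 1 / q →
      Tendsto (fun n : ℕ => (PhiStarP α n).eval z) atTop (nhds (S z))) :
    ∀ z : ℂ, q < ‖z‖ →
      Tendsto (fun n : ℕ => (PhiP α n).eval z / z ^ n) atTop
        (nhds ((starRingEnd ℂ) (S (((starRingEnd ℂ) z)⁻¹)))) := by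
  intro z hz
  have hz0 : z ≠ 0 := norm_pos_iff.mp (hq0.trans hz)
  have hw : ‖(starRingEnd ℂ z)⁻¹‖ < 1 / q := by
    simpa [one_div] using inv_strictAnti₀ hq0 hz
  refine ((Complex.continuous_conj.tendsto _).comp (hS _ hw)).congr fun n => ?_
  exact (eval_div_pow_eq_conj_eval_reflect_map_conj (natDegree_PhiP_le α n) hz0).symm

theorem stmt_5 (α : ℕ → ℂ) (hα : ∀ n, ‖α n‖ < 1)
    (C q : ℝ) (hC : 0 < C) (hq0 : 0 < q) (hq1 : q < 1)
    (hdecay : ∀ n : ℕ, ‖α n‖ ≤ C * q ^ n)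
    (S : ℂ → ℂ)
    (hS : ∀ z : ℂ, ‖z‖ < 1 / q →
      Tendsto (fun n : ℕ => (PhiStarP α n).eval z) atTop (nhds (S z))) :
    ∀ z : ℂ, q < ‖z‖ →
      Tendsto (fun n : ℕ => (PhiP α n).eval z / z ^ n) atTop
        (nhds ((starRingEnd ℂ) (S (((starRingEnd ℂ) z)⁻¹)))) :=
  stmt_5_general α q hq0 S hS
end
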